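/- Let Ψ be the honest leased decryption key (the product over all ℓ positions of the per-position states ψᵢ), let T be a type with decidable equality, f : (Fin λ → 𝔽₂) → T, and set t i b := f (s i b) for all i, b (the testing key). Say that KeyTest accepts a basis string w : Fin ℓ → 𝔽₂ × (Fin λ → 𝔽₂) when f((w i).2) = t i ((w i).1) for every i. Then the sum of |Ψ(w)|² over all w accepted by KeyTest equals 1. (Correctness of key testability: applying the KeyTest predicate in superposition to the honest decryption key and measuring the result yields outcome 1 with probability 1.) -/

import Mathlib

open Finset

noncomputable section

/-- χ(a) ∈ ℂ equals 1 if a = 0 and −1 if a = 1, for a ∈ 𝔽₂. -/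
def chi (a : ZMod 2) : ℂ := if a = 0 then 1 else -1

/-- Inner product d·u = ∑ᵢ (d i)·(u i) over 𝔽₂. -/
def dotF2 {n : ℕ} (d u : Fin n → ZMod 2) : ZMod 2 := ∑ i, d i * u i

/-- The per-position state ψᵢ of the honest leased decryption key:
a signed superposition at Hadamard positions (θ i = 1), a computational-basis
state at computational positions (θ i = 0). -/
def psiPos (ℓ lam : ℕ) (x θ : Fin ℓ → ZMod 2)
    (s : Fin ℓ → ZMod 2 → (Fin lam → ZMod 2)) (i : Fin ℓ) :
    ZMod 2 × (Fin lam → ZMod 2) → ℂ := fun p =>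
  if θ i = 1 then
    (1 / (Real.sqrt 2 : ℂ)) * (if p.1 = 0 ∧ p.2 = s i 0 then 1 else 0)
      + (chi (x i) / (Real.sqrt 2 : ℂ)) * (if p.1 = 1 ∧ p.2 = s i 1 then 1 else 0)
  else
    (if p.1 = x i ∧ p.2 = s i (x i) then 1 else 0)

/-- The honest leased decryption key: the product state Ψ(w) = ∏ᵢ ψᵢ(w i). -/
def keyState (ℓ lam : ℕ) (x θ : Fin ℓ → ZMod 2)
    (s : Fin ℓ → ZMod 2 → (Fin lam → ZMod 2)) :
    (Fin ℓ → ZMod 2 × (Fin lam → ZMod 2)) → ℂ := fun w =>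
  ∏ i, psiPos ℓ lam x θ s i (w i)

lemma zmod2_cases (a : ZMod 2) : a = 0 ∨ a = 1 := by
  revert a; decide

lemma abs_chi (a : ZMod 2) : ‖chi a‖ = 1 := by
  unfold chi; split <;> simp

lemma psi_ne_zero (ℓ lam : ℕ) (x θ : Fin ℓ → ZMod 2)
    (s : Fin ℓ → ZMod 2 → (Fin lam → ZMod 2)) (i : Fin ℓ)
    (p : ZMod 2 × (Fin lam → ZMod 2)) (h : psiPos ℓ lam x θ s i p ≠ 0) :
    p.2 = s i p.1 := by
  obtain ⟨a, u⟩ := p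
  unfold psiPos at h
  have hs : (Real.sqrt 2 : ℂ) ≠ 0 := by
    simp [Real.sqrt_eq_zero']
  have hchi : chi (x i) ≠ 0 := by
    unfold chi; split <;> simp
  simp only at h ⊢
  by_cases hθ : θ i = 1
  · simp only [hθ, if_true] at h
    by_contra hne
    rcases zmod2_cases a with ha | ha <;> subst ha <;>
      simp_all [show ¬((0 : ZMod 2) = 1) by decide, show ¬((1 : ZMod 2) = 0) by decide]
  · simp only [hθ, if_false] at h
    by_contra hne
    rcases Decidable.em (a = x i) with ha | ha
    · subst ha; simp [hne] at h
    · simp [ha] at h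

lemma sum_psi_sq (ℓ lam : ℕ) (x θ : Fin ℓ → ZMod 2)
    (s : Fin ℓ → ZMod 2 → (Fin lam → ZMod 2)) (i : Fin ℓ) :
    ∑ p : ZMod 2 × (Fin lam → ZMod 2),
      ‖psiPos ℓ lam x θ s i p‖ ^ 2 = 1 := by
  have hsq : ‖((Real.sqrt 2 : ℂ))‖ = Real.sqrt 2 := by
    rw [Complex.norm_real, Real.norm_eq_abs, abs_of_nonneg (Real.sqrt_nonneg 2)]
  have h2 : (Real.sqrt 2) ^ 2 = 2 := Real.sq_sqrt (by norm_num)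
  by_cases hθ : θ i = 1
  · have key : ∀ p : ZMod 2 × (Fin lam → ZMod 2),
        ‖psiPos ℓ lam x θ s i p‖ ^ 2 =
        (if p = (0, s i 0) then (1:ℝ)/2 else 0) +
        (if p = (1, s i 1) then (1:ℝ)/2 else 0) := by
      rintro ⟨a, u⟩
      unfold psiPos
      simp only [hθ, if_true, Prod.mk.injEq]
      rcases zmod2_cases a with ha | ha <;> subst ha
      · simp only [show ((0 : ZMod 2) = 1) = False by simp, false_and, if_false,
          mul_zero, add_zero, if_false, add_zero, true_and]
        rcases Decidable.em (u = s i 0) with hu | hu <;>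
          simp [hu, norm_div, hsq, div_pow, h2]
      · simp only [show ((1 : ZMod 2) = 0) = False by simp, false_and, if_false,
          mul_zero, zero_add, if_false, zero_add, true_and]
        rcases Decidable.em (u = s i 1) with hu | hu <;>
          simp [hu, norm_div, norm_mul, hsq, div_pow, h2, mul_pow, abs_chi]
    simp_rw [key]
    rw [Finset.sum_add_distrib, Finset.sum_ite_eq' Finset.univ,
      Finset.sum_ite_eq' Finset.univ]
    norm_num
  · have key : ∀ p : ZMod 2 × (Fin lam → ZMod 2),
        ‖psiPos ℓ lam x θ s i p‖ ^ 2 =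
        (if p = (x i, s i (x i)) then (1:ℝ) else 0) := by
      rintro ⟨a, u⟩
      unfold psiPos
      simp only [hθ, if_false, Prod.mk.injEq]
      rcases Decidable.em (a = x i ∧ u = s i (x i)) with hu | hu <;> simp [hu]
    simp_rw [key]
    rw [Finset.sum_ite_eq' Finset.univ]
    simp

/-- Correctness of key testability: applying the KeyTest predicate in superposition
to the honest decryption key and measuring the result yields outcome 1 with
probability 1. -/
theorem keyTest_accepts_honest_key (ℓ lam : ℕ) (x θ : Fin ℓ → ZMod 2)
    (s : Fin ℓ → ZMod 2 → (Fin lam → ZMod 2))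
    (T : Type) [DecidableEq T] (f : (Fin lam → ZMod 2) → T)
    (t : Fin ℓ → ZMod 2 → T) (ht : ∀ i b, t i b = f (s i b)) :
    ∑ w ∈ Finset.univ.filter
        (fun w : Fin ℓ → ZMod 2 × (Fin lam → ZMod 2) =>
          ∀ i, f ((w i).2) = t i ((w i).1)),
      ‖keyState ℓ lam x θ s w‖ ^ 2 = 1 := by
  rw [Finset.sum_filter_of_ne]
  · have key : ∀ w, ‖keyState ℓ lam x θ s w‖ ^ 2 =
        ∏ i, ‖psiPos ℓ lam x θ s i (w i)‖ ^ 2 := by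
      intro w
      rw [keyState, norm_prod, ← Finset.prod_pow]
    simp_rw [key]
    rw [← Fintype.piFinset_univ,
      ← Finset.prod_univ_sum (fun _ => Finset.univ)
        (fun i p => ‖psiPos ℓ lam x θ s i p‖ ^ 2)]
    simp [sum_psi_sq ℓ lam x θ s]
  · intro w _ hw i
    have hk : keyState ℓ lam x θ s w ≠ 0 := by
      intro h0
      rw [h0] at hw; simp at hw
    have hne : psiPos ℓ lam x θ s i (w i) ≠ 0 := by
      intro h0
      exact hk (Finset.prod_eq_zero (Finset.mem_univ i) h0)
    rw [psi_ne_zero ℓ lam x θ s i (w i) hne, ht]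

end
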